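/- arXiv:1709.02580 — 3 statements merged into one kernel-verified Lean document; each statement's English description precedes it below -/
import Mathlib

section
/- Let p be an odd prime, n a positive integer, and S a totally isotropic subspace of F_p^n × F_p^n. Let P = ∑_{(a,b)∈S} ζ^{a·b} U_a V_b, an operator on the space of complex-valued functions on F_p^n. Then 𝒩 P 𝒩⁻¹ = P if and only if S is simultaneously negacyclic, i.e., (a,b) ∈ S implies (Na, Nb) ∈ S. -/
/-!
Since `ζ^{a·b} (U_a V_b ψ)(x) = ζ^{b·x} ψ(x - a)`, the operator `P` is the sum over `S` of the
operators `W_{a,b} : ψ ↦ (x ↦ ζ^{b·x} ψ(x - a))`. The negashift preserves the dot product, so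
conjugating by `𝒩` replaces `S` by its image under `N × N`. The `W_{a,b}` are linearly
independent (evaluate at point masses and use the linear independence of the distinct characters
`x ↦ ζ^{b·x}`), hence `𝒩 P 𝒩⁻¹ = P` iff `(N × N)(S) = S`; as `S` is finite and `N × N` injective,
this is the same as `(N × N)(S) ⊆ S`.
-/

open Complex

/-- The negacyclic shift `N : F_p^n → F_p^n`,
`(u_0, …, u_{n−1}) ↦ (−u_{n−1}, u_0, …, u_{n−2})`. -/
def negashift (p n : ℕ) (hn : 0 < n) (u : Fin n → ZMod p) : Fin n → ZMod p :=
  fun i => if (i : ℕ) = 0 then -u ⟨n - 1, Nat.sub_lt hn Nat.one_pos⟩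
           else u ⟨(i : ℕ) - 1, Nat.lt_of_le_of_lt (Nat.sub_le _ _) i.isLt⟩

/-- The inverse of the negacyclic shift:
`(u_0, …, u_{n−1}) ↦ (u_1, …, u_{n−1}, −u_0)`. -/
def negashiftInv (p n : ℕ) (hn : 0 < n) (u : Fin n → ZMod p) : Fin n → ZMod p :=
  fun i => if h : (i : ℕ) + 1 < n then u ⟨(i : ℕ) + 1, h⟩ else -u ⟨0, hn⟩

/-- The symplectic inner product on `F_p^n × F_p^n`. -/
def sympForm (p n : ℕ) (u v : (Fin n → ZMod p) × (Fin n → ZMod p)) : ZMod p :=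
  (∑ j, u.1 j * v.2 j) - (∑ j, u.2 j * v.1 j)

/-- `ζ^c = exp(2πi·c/p)` for `c ∈ F_p`, with `ζ = exp(2πi/p)`. -/
noncomputable def zetaPow (p : ℕ) (c : ZMod p) : ℂ :=
  Complex.exp (2 * Real.pi * Complex.I * (c.val : ℂ) / (p : ℂ))

/-- The dot product `a·b = ∑_j a_j b_j` on `F_p^n`. -/
def dotp (p n : ℕ) (a b : Fin n → ZMod p) : ZMod p := ∑ j, a j * b j

/-- The Weyl operator `U_a`: `(U_a ψ)(x) = ψ(x − a)`. -/
def Uop (p n : ℕ) (a : Fin n → ZMod p) (ψ : (Fin n → ZMod p) → ℂ) :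
    (Fin n → ZMod p) → ℂ := fun x => ψ (x - a)

/-- The Weyl operator `V_b`: `(V_b ψ)(x) = ζ^{b·x} ψ(x)`. -/
noncomputable def Vop (p n : ℕ) (b : Fin n → ZMod p) (ψ : (Fin n → ZMod p) → ℂ) :
    (Fin n → ZMod p) → ℂ := fun x => zetaPow p (dotp p n b x) * ψ x

/-- The projection-like operator `P = ∑_{(a,b)∈S} ζ^{a·b} U_a V_b`. -/
noncomputable def Pop (p n : ℕ) (S : Set ((Fin n → ZMod p) × (Fin n → ZMod p)))
    (ψ : (Fin n → ZMod p) → ℂ) : (Fin n → ZMod p) → ℂ :=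
  fun x => ∑ᶠ ab ∈ S, zetaPow p (dotp p n ab.1 ab.2) * Uop p n ab.1 (Vop p n ab.2 ψ) x

section Negashift

variable (p n : ℕ) (hn : 0 < n)

lemma negashift_negashiftInv (u : Fin n → ZMod p) :
    negashift p n hn (negashiftInv p n hn u) = u := by
  funext i
  by_cases hi : (i : ℕ) = 0
  · have : ¬n - 1 + 1 < n := by omega
    simp only [negashift, hi, ↓reduceIte, negashiftInv, this, ↓reduceDIte, neg_neg]
    exact congrArg u (Fin.ext hi.symm)
  · have : (i : ℕ) - 1 + 1 < n := by omega
    simp only [negashift, negashiftInv, hi, this, if_false, dif_pos]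
    exact congrArg u (Fin.ext (by simp; omega))

lemma negashiftInv_negashift (u : Fin n → ZMod p) :
    negashiftInv p n hn (negashift p n hn u) = u := by
  funext i
  by_cases hi : (i : ℕ) + 1 < n
  · simp [negashift, negashiftInv, hi]
  · simp only [negashift, negashiftInv, hi, dif_neg, if_pos, neg_neg, not_false_eq_true]
    exact congrArg u (Fin.ext (by simp; omega))

lemma negashift_injective : Function.Injective (negashift p n hn) :=
  Function.LeftInverse.injective (negashiftInv_negashift p n hn)

lemma negashift_sub (u v : Fin n → ZMod p) :
    negashift p n hn (u - v) = negashift p n hn u - negashift p n hn v := by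
  funext i
  by_cases hi : (i : ℕ) = 0 <;> simp only [negashift, hi, ↓reduceIte, Pi.sub_apply]
  abel

lemma dotp_negashift (a b : Fin n → ZMod p) :
    dotp p n (negashift p n hn a) (negashift p n hn b) = dotp p n a b := by
  obtain ⟨m, rfl⟩ : ∃ m, n = m + 1 := ⟨n - 1, by omega⟩
  have negashift_succ (u : Fin (m + 1) → ZMod p) (i : Fin m) :
      negashift p (m + 1) hn u i.succ = u i.castSucc := by
    simp only [negashift, Fin.val_succ, Nat.add_eq_zero_iff, one_ne_zero, and_false, ↓reduceIte,
      add_tsub_cancel_right]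
    rfl
  simp only [dotp, Fin.sum_univ_succ, Fin.sum_univ_castSucc (f := fun j => a j * b j),
    negashift_succ]
  simp only [negashift, Fin.coe_ofNat_eq_mod, Nat.zero_mod, ↓reduceIte, add_tsub_cancel_right,
    neg_mul_neg]
  exact add_comm _ _

lemma dotp_negashiftInv (b x : Fin n → ZMod p) :
    dotp p n b (negashiftInv p n hn x) = dotp p n (negashift p n hn b) x := by
  conv_lhs => rw [← dotp_negashift p n hn, negashift_negashiftInv]

end Negashift

section Characters

variable {p : ℕ} [NeZero p]

lemma zetaPow_eq_stdAddChar (c : ZMod p) : zetaPow p c = ZMod.stdAddChar c := by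
  rw [ZMod.stdAddChar_apply, ZMod.toCircle_apply, zetaPow]

lemma zetaPow_add (c d : ZMod p) : zetaPow p (c + d) = zetaPow p c * zetaPow p d := by
  simp only [zetaPow_eq_stdAddChar, AddChar.map_add_eq_mul]

variable (p) (n : ℕ)

noncomputable def dotChar (b : Fin n → ZMod p) : AddChar (Fin n → ZMod p) ℂ :=
  ZMod.stdAddChar.compAddMonoidHom (dotProductBilin (ZMod p) (ZMod p) b).toAddMonoidHom

lemma dotChar_apply (b x : Fin n → ZMod p) : dotChar p n b x = zetaPow p (dotp p n b x) := by
  rw [zetaPow_eq_stdAddChar]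
  rfl

lemma dotChar_injective : Function.Injective (dotChar p n) := by
  intro b b' h
  funext j
  apply AddChar.to_mulShift_inj_of_isPrimitive (ZMod.isPrimitive_stdAddChar p)
  ext t
  simpa [dotChar, dotProductBilin, dotProduct_single] using
    DFunLike.congr_fun h (Pi.single j t)

lemma linearIndependent_zetaPow_dotp :
    LinearIndependent ℂ fun (b x : Fin n → ZMod p) => zetaPow p (dotp p n b x) := by
  simp only [← dotChar_apply]
  exact (AddChar.linearIndependent _ ℂ).comp _ (dotChar_injective p n)

end Characters

theorem eq_zero_of_sum_mul_translate_eq_zero {G ι K : Type*} [AddGroup G] [Fintype G]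
    [DecidableEq G] [Fintype ι] [Ring K] {χ : ι → G → K} (hχ : LinearIndependent K χ)
    {c : G × ι → K} (h : ∀ (ψ : G → K) (x : G), ∑ ai, c ai * (χ ai.2 x * ψ (x - ai.1)) = 0) :
    c = 0 := by
  funext ⟨a, i⟩
  have hslice : ∑ j, c (a, j) • χ j = 0 := by
    funext x
    have hx := h (Pi.single (x - a) 1) x
    simp only [Fintype.sum_prod_type, Pi.single_apply, sub_right_inj] at hx
    simpa [Finset.sum_ite_eq'] using hx
  exact Fintype.linearIndependent_iff.mp hχ (fun j => c (a, j)) hslice i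

section Pop

variable {p : ℕ} [NeZero p] {n : ℕ}

-- The phases combine: `a·b + b·(x - a) = b·x`.
lemma Pop_apply (S : Set ((Fin n → ZMod p) × (Fin n → ZMod p))) (ψ : (Fin n → ZMod p) → ℂ)
    (x : Fin n → ZMod p) :
    Pop p n S ψ x = ∑ᶠ ab ∈ S, zetaPow p (dotp p n ab.2 x) * ψ (x - ab.1) := by
  refine finsum_mem_congr rfl fun ab _ => ?_
  rw [Uop, Vop, ← mul_assoc, ← zetaPow_add, dotp, dotp, dotp, ← dotProduct, ← dotProduct,
    ← dotProduct, dotProduct_sub, dotProduct_comm ab.1 ab.2, add_sub_cancel]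

lemma Pop_negashift_conj (hn : 0 < n) (S : Set ((Fin n → ZMod p) × (Fin n → ZMod p)))
    (ψ : (Fin n → ZMod p) → ℂ) (x : Fin n → ZMod p) :
    Pop p n S (fun y => ψ (negashift p n hn y)) (negashiftInv p n hn x)
      = Pop p n (Prod.map (negashift p n hn) (negashift p n hn) '' S) ψ x := by
  have hinj := negashift_injective p n hn
  rw [Pop_apply, Pop_apply, finsum_mem_image (hinj.prodMap hinj).injOn]
  refine finsum_mem_congr rfl fun ab _ => ?_
  rw [dotp_negashiftInv, negashift_sub, negashift_negashiftInv, Prod.map_fst, Prod.map_snd]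

lemma eq_of_Pop_eq {S T : Set ((Fin n → ZMod p) × (Fin n → ZMod p))}
    (h : ∀ ψ x, Pop p n S ψ x = Pop p n T ψ x) : S = T := by
  have hPop (U : Set ((Fin n → ZMod p) × (Fin n → ZMod p))) ψ x :
      Pop p n U ψ x = ∑ ab, U.indicator 1 ab * (zetaPow p (dotp p n ab.2 x) * ψ (x - ab.1)) := by
    classical
    rw [Pop_apply, finsum_mem_def, finsum_eq_sum_of_fintype]
    simp only [Set.indicator_apply, Pi.one_apply, ite_mul, one_mul, zero_mul]
  apply Set.indicator_one_inj ℂ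
  rw [← sub_eq_zero]
  refine eq_zero_of_sum_mul_translate_eq_zero (linearIndependent_zetaPow_dotp p n) fun ψ x => ?_
  simp only [Pi.sub_apply, sub_mul, Finset.sum_sub_distrib, ← hPop, h, sub_self]

end Pop

theorem stmt2_general (p n : ℕ) [Fact p.Prime] (hn : 0 < n)
    (S : Submodule (ZMod p) ((Fin n → ZMod p) × (Fin n → ZMod p))) :
    (∀ ψ : (Fin n → ZMod p) → ℂ, ∀ x : Fin n → ZMod p,
        Pop p n (S : Set ((Fin n → ZMod p) × (Fin n → ZMod p)))
          (fun y => ψ (negashift p n hn y)) (negashiftInv p n hn x)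
          = Pop p n (S : Set ((Fin n → ZMod p) × (Fin n → ZMod p))) ψ x)
      ↔ ∀ ab ∈ S, (negashift p n hn ab.1, negashift p n hn ab.2) ∈ S := by
  simp only [Pop_negashift_conj hn]
  have hinj := negashift_injective p n hn
  constructor
  · intro h ab hab
    rw [← SetLike.mem_coe, ← eq_of_Pop_eq h]
    exact Set.mem_image_of_mem _ hab
  · intro h ψ x
    have hmaps : Set.MapsTo (Prod.map (negashift p n hn) (negashift p n hn)) S S := h
    rw [((S : Set _).toFinite.injOn_iff_bijOn_of_mapsTo hmaps).mp (hinj.prodMap hinj).injOn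
      |>.image_eq]

/-- `𝒩 P 𝒩⁻¹ = P` iff `S` is simultaneously negacyclic.  Here
`(𝒩ψ)(x) = ψ(N⁻¹x)`, so `(𝒩 P 𝒩⁻¹ ψ)(x) = (P (ψ ∘ N))(N⁻¹ x)`. -/
theorem stmt2 (p n : ℕ) [Fact p.Prime] (hp : Odd p) (hn : 0 < n)
    (S : Submodule (ZMod p) ((Fin n → ZMod p) × (Fin n → ZMod p)))
    (hiso : ∀ u ∈ S, ∀ v ∈ S, sympForm p n u v = 0) :
    (∀ ψ : (Fin n → ZMod p) → ℂ, ∀ x : Fin n → ZMod p,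
        Pop p n (S : Set ((Fin n → ZMod p) × (Fin n → ZMod p)))
          (fun y => ψ (negashift p n hn y)) (negashiftInv p n hn x)
          = Pop p n (S : Set ((Fin n → ZMod p) × (Fin n → ZMod p))) ψ x)
      ↔ ∀ ab ∈ S, (negashift p n hn ab.1, negashift p n hn ab.2) ∈ S :=
  stmt2_general p n hn S
end

section
/- Let p be an odd prime, n a positive integer, g, f ∈ R = F_p[X]/(X^n+1), and let S = {(a·g, a·f) : a ∈ R}, regarded as a subspace of F_p^n × F_p^n. Then: (1) S is totally isotropic with respect to the symplectic inner product if and only if g(x)·f(x⁻¹) = f(x)·g(x⁻¹) in R; (2) an element (a,b) of F_p^n × F_p^n lies in S^⊥ if and only if a(x)·f(x⁻¹) = b(x)·g(x⁻¹) in R. -/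
open Polynomial

/-- The cyclotomic ring `R = F_p[X]/(X^n + 1)`. -/
abbrev Rpn (p n : ℕ) := Polynomial (ZMod p) ⧸ Ideal.span {(X : Polynomial (ZMod p)) ^ n + 1}

/-- The quotient map `F_p[X] → R`. -/
noncomputable def mkR (p n : ℕ) : Polynomial (ZMod p) →+* Rpn p n :=
  Ideal.Quotient.mk (Ideal.span {(X : Polynomial (ZMod p)) ^ n + 1})

/-- The polynomial `a_0 + a_1 X + ⋯ + a_{n−1} X^{n−1}` attached to a vector. -/
noncomputable def toPoly (p n : ℕ) (a : Fin n → ZMod p) : Polynomial (ZMod p) :=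
  ∑ j : Fin n, C (a j) * X ^ (j : ℕ)

/-- The identification `F_p^n → R`, `a ↦ a(x)`. -/
noncomputable def toR (p n : ℕ) (a : Fin n → ZMod p) : Rpn p n := mkR p n (toPoly p n a)

/-- `x⁻¹ = −x^{n−1}` in `R`, where `x` is the image of `X`. -/
noncomputable def xinv (p n : ℕ) : Rpn p n := -(mkR p n X) ^ (n - 1)

namespace Negacyclic

variable {K : Type*} [CommRing K] {n : ℕ}

local notation "𝓡" => K[X] ⧸ Ideal.span {(X : K[X]) ^ n + 1}

theorem monic_X_pow_add_one [NeZero n] : (X ^ n + 1 : K[X]).Monic := by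
  simpa using monic_X_pow_add_C (1 : K) (NeZero.ne n)

variable (K n) in
noncomputable def root : 𝓡 := Ideal.Quotient.mk _ X

theorem root_pow : root K n ^ n = -1 := by
  rw [root, ← map_pow, eq_neg_iff_add_eq_zero, ← map_one (Ideal.Quotient.mk _), ← map_add,
    Ideal.Quotient.eq_zero_iff_mem]
  exact Ideal.subset_span rfl

theorem root_mul_root_pow_pred [NeZero n] : root K n * root K n ^ (n - 1) = -1 := by
  rw [← pow_succ', Nat.sub_add_cancel NeZero.one_le, root_pow]

variable (K n) in
noncomputable def rootUnit [NeZero n] : 𝓡ˣ where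
  val := root K n
  inv := -root K n ^ (n - 1)
  val_inv := by linear_combination -root_mul_root_pow_pred (K := K) (n := n)
  inv_val := by linear_combination -root_mul_root_pow_pred (K := K) (n := n)

@[simp]
theorem val_rootUnit [NeZero n] : (rootUnit K n : 𝓡) = root K n := rfl

theorem aeval_rootUnit_inv_X_pow_add_one [NeZero n] :
    aeval (↑(rootUnit K n)⁻¹ : 𝓡) (X ^ n + 1 : K[X]) = 0 := by
  have h : (↑(rootUnit K n)⁻¹ : 𝓡) ^ n * root K n ^ n = 1 := by
    rw [← mul_pow, ← val_rootUnit, Units.inv_mul, one_pow]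
  rw [map_add, map_pow, aeval_X, map_one]
  linear_combination -h + (↑(rootUnit K n)⁻¹ : 𝓡) ^ n * root_pow (K := K) (n := n)

variable (K n) in
noncomputable def conj [NeZero n] : 𝓡 →ₐ[K] 𝓡 :=
  Ideal.Quotient.liftₐ _ (aeval (↑(rootUnit K n)⁻¹ : 𝓡)) fun a ha => by
    obtain ⟨b, rfl⟩ := Ideal.mem_span_singleton'.1 ha
    rw [map_mul, aeval_rootUnit_inv_X_pow_add_one, mul_zero]

theorem conj_mk [NeZero n] (P : K[X]) :
    conj K n (Ideal.Quotient.mk _ P) = aeval (↑(rootUnit K n)⁻¹ : 𝓡) P := rfl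

theorem conj_root [NeZero n] : conj K n (root K n) = ↑(rootUnit K n)⁻¹ := by
  rw [root, conj_mk, aeval_X]

variable (K n) in
noncomputable def constCoeff [NeZero n] : 𝓡 →ₗ[K] K :=
  (lcoeff K 0).comp (AdjoinRoot.modByMonicHom monic_X_pow_add_one)

theorem constCoeff_mk [NeZero n] (P : K[X]) :
    constCoeff K n (Ideal.Quotient.mk _ P) = (P %ₘ (X ^ n + 1)).coeff 0 := rfl

theorem constCoeff_root_pow [NeZero n] {m : ℕ} (hm : m < n) :
    constCoeff K n (root K n ^ m) = if m = 0 then 1 else 0 := by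
  nontriviality K
  have hdeg : (X ^ m : K[X]).degree < (X ^ n + 1 : K[X]).degree := by
    rw [degree_X_pow, ← C_1, degree_X_pow_add_C (Nat.pos_of_neZero n)]
    exact_mod_cast hm
  rw [root, ← map_pow, constCoeff_mk, (modByMonic_eq_self_iff monic_X_pow_add_one).2 hdeg,
    coeff_X_pow]
  simp only [eq_comm]

theorem constCoeff_one [NeZero n] : constCoeff K n 1 = 1 := by
  simpa using constCoeff_root_pow (K := K) (n := n) (m := 0) (Nat.pos_of_neZero n)

theorem constCoeff_rootUnit_zpow [NeZero n] {m : ℤ} (hlo : -n < m) (hhi : m < n) :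
    constCoeff K n ↑(rootUnit K n ^ m) = if m = 0 then 1 else 0 := by
  obtain ⟨k, rfl | rfl⟩ := Int.eq_nat_or_neg m
  · rw [zpow_natCast, Units.val_pow_eq_pow_val, val_rootUnit, constCoeff_root_pow (by omega)]
    simp
  rcases Nat.eq_zero_or_pos k with rfl | hk
  · simp [constCoeff_one]
  have hneg : (↑(rootUnit K n ^ (-(k : ℤ))) : 𝓡) = -root K n ^ (n - k) := by
    calc (↑(rootUnit K n ^ (-(k : ℤ))) : 𝓡)
        = -(↑(rootUnit K n ^ (-(k : ℤ))) * ↑(rootUnit K n ^ (n : ℤ))) := by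
          rw [zpow_natCast, Units.val_pow_eq_pow_val, val_rootUnit, root_pow]; ring
      _ = -↑(rootUnit K n ^ ((n - k : ℕ) : ℤ)) := by
          rw [← Units.val_mul, ← zpow_add]; congr 3; omega
      _ = -root K n ^ (n - k) := by rw [zpow_natCast, Units.val_pow_eq_pow_val, val_rootUnit]
  rw [hneg, map_neg, constCoeff_root_pow (by omega), if_neg (by omega), if_neg (by omega),
    neg_zero]

theorem constCoeff_mul_conj [NeZero n] (a c : Fin n → K) :
    constCoeff K n ((∑ j : Fin n, a j • root K n ^ (j : ℕ)) *
      conj K n (∑ k : Fin n, c k • root K n ^ (k : ℕ))) = ∑ j, a j * c j := by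
  have hterm : ∀ j k : Fin n, a j • root K n ^ (j : ℕ) * conj K n (c k • root K n ^ (k : ℕ))
      = (a j * c k) • ↑(rootUnit K n ^ ((j : ℤ) - k)) := by
    intro j k
    rw [map_smul, map_pow, conj_root, zpow_sub, zpow_natCast, zpow_natCast, Units.val_mul,
      ← inv_pow, Units.val_pow_eq_pow_val, Units.val_pow_eq_pow_val, val_rootUnit,
      smul_mul_smul_comm]
  rw [map_sum, Fintype.sum_mul_sum, map_sum]
  simp_rw [hterm, map_sum, map_smul, smul_eq_mul]
  refine Finset.sum_congr rfl fun j _ => ?_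
  rw [Finset.sum_eq_single j]
  · rw [sub_self, zpow_zero, Units.val_one, constCoeff_one, mul_one]
  · intro k _ hkj
    have : (k : ℕ) ≠ j := Fin.val_ne_of_ne hkj
    rw [constCoeff_rootUnit_zpow (by omega) (by omega), if_neg (by omega), mul_zero]
  · simp

theorem mk_sum_C_mul_X_pow (a : Fin n → K) :
    Ideal.Quotient.mk _ (∑ j : Fin n, C (a j) * X ^ (j : ℕ)) = ∑ j, a j • root K n ^ (j : ℕ) := by
  rw [map_sum]
  refine Finset.sum_congr rfl fun j _ => ?_
  rw [← smul_eq_C_mul, ← Ideal.Quotient.mkₐ_eq_mk K, map_smul, map_pow]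
  rfl

theorem exists_sum_smul_root_pow_eq [NeZero n] (r : 𝓡) :
    ∃ a : Fin n → K, ∑ j : Fin n, a j • root K n ^ (j : ℕ) = r := by
  obtain ⟨P, rfl⟩ := Ideal.Quotient.mk_surjective r
  set P' := P %ₘ (X ^ n + 1)
  have hdeg : P'.natDegree < n := by
    rcases subsingleton_or_nontrivial K with _ | _
    · rw [Subsingleton.elim P' 0, natDegree_zero]
      exact Nat.pos_of_neZero n
    · have h := natDegree_modByMonic_lt P monic_X_pow_add_one
        (by simpa using (monic_X_pow (R := K) n).ne_zero)
      rwa [← C_1, natDegree_X_pow_add_C] at h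
  refine ⟨fun j => P'.coeff j, ?_⟩
  rw [← mk_sum_C_mul_X_pow, Fin.sum_univ_eq_sum_range (fun j => C (P'.coeff j) * X ^ j),
    ← as_sum_range_C_mul_X_pow' P' hdeg]
  exact AdjoinRoot.mk_leftInverse monic_X_pow_add_one (AdjoinRoot.mk _ P)

theorem eq_zero_of_forall_constCoeff_mul_conj_eq_zero [NeZero n] {h : 𝓡}
    (H : ∀ d, constCoeff K n (h * conj K n d) = 0) : h = 0 := by
  obtain ⟨e, rfl⟩ := exists_sum_smul_root_pow_eq h
  have he : ∀ k, e k = 0 := fun k => by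
    have := H (∑ j, (Pi.single k 1 : Fin n → K) j • root K n ^ (j : ℕ))
    rw [constCoeff_mul_conj] at this
    simpa [Pi.single_apply] using this
  simp [he]

end Negacyclic

open Negacyclic

variable {p n : ℕ}

theorem toR_eq_sum (a : Fin n → ZMod p) : toR p n a = ∑ j, a j • root (ZMod p) n ^ (j : ℕ) :=
  mk_sum_C_mul_X_pow a

theorem toR_surjective [NeZero n] : Function.Surjective (toR p n) := fun r => by
  obtain ⟨a, ha⟩ := exists_sum_smul_root_pow_eq r
  exact ⟨a, (toR_eq_sum a).trans ha⟩

theorem aeval_xinv [NeZero n] (P : (ZMod p)[X]) :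
    aeval (xinv p n) P = conj (ZMod p) n (mkR p n P) := rfl

theorem sympForm_eq_constCoeff [NeZero n] (u v : (Fin n → ZMod p) × (Fin n → ZMod p)) :
    sympForm p n u v = constCoeff (ZMod p) n
      (toR p n u.1 * conj (ZMod p) n (toR p n v.2) -
        toR p n u.2 * conj (ZMod p) n (toR p n v.1)) := by
  rw [map_sub, toR_eq_sum, toR_eq_sum, toR_eq_sum, toR_eq_sum, constCoeff_mul_conj,
    constCoeff_mul_conj]
  rfl

theorem sympForm_eq_of_eq_mul [NeZero n] {g f : (ZMod p)[X]}
    (u : (Fin n → ZMod p) × (Fin n → ZMod p)) {v : (Fin n → ZMod p) × (Fin n → ZMod p)}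
    {d : Rpn p n} (h1 : toR p n v.1 = d * mkR p n g) (h2 : toR p n v.2 = d * mkR p n f) :
    sympForm p n u v = constCoeff (ZMod p) n
      ((toR p n u.1 * aeval (xinv p n) f - toR p n u.2 * aeval (xinv p n) g) *
        conj (ZMod p) n d) := by
  rw [sympForm_eq_constCoeff, h1, h2, map_mul, map_mul, ← aeval_xinv, ← aeval_xinv]
  congr 1
  ring

/-- The subspace `S = R · (g, f)`. -/
def negacyclicCode (p n : ℕ) (g f : (ZMod p)[X]) : Set ((Fin n → ZMod p) × (Fin n → ZMod p)) :=
  {ab | ∃ a : Rpn p n, toR p n ab.1 = a * mkR p n g ∧ toR p n ab.2 = a * mkR p n f}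

theorem forall_sympForm_negacyclicCode_eq_zero_iff [NeZero n] (g f : (ZMod p)[X])
    (u : (Fin n → ZMod p) × (Fin n → ZMod p)) :
    (∀ v ∈ negacyclicCode p n g f, sympForm p n u v = 0) ↔
      toR p n u.1 * aeval (xinv p n) f = toR p n u.2 * aeval (xinv p n) g := by
  constructor
  · intro H
    rw [← sub_eq_zero]
    refine eq_zero_of_forall_constCoeff_mul_conj_eq_zero fun d => ?_
    obtain ⟨v₁, hv₁⟩ := toR_surjective (d * mkR p n g)
    obtain ⟨v₂, hv₂⟩ := toR_surjective (d * mkR p n f)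
    rw [← sympForm_eq_of_eq_mul u (v := (v₁, v₂)) hv₁ hv₂]
    exact H (v₁, v₂) ⟨d, hv₁, hv₂⟩
  · rintro h v ⟨d, hd₁, hd₂⟩
    rw [sympForm_eq_of_eq_mul u hd₁ hd₂, sub_eq_zero.2 h, zero_mul, map_zero]

theorem isotropic_negacyclicCode_iff [NeZero n] (g f : (ZMod p)[X]) :
    (∀ u ∈ negacyclicCode p n g f, ∀ v ∈ negacyclicCode p n g f, sympForm p n u v = 0) ↔
      mkR p n g * aeval (xinv p n) f = mkR p n f * aeval (xinv p n) g := by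
  simp_rw [forall_sympForm_negacyclicCode_eq_zero_iff]
  constructor
  · intro H
    obtain ⟨u₁, hu₁⟩ := toR_surjective (mkR p n g)
    obtain ⟨u₂, hu₂⟩ := toR_surjective (mkR p n f)
    simpa [hu₁, hu₂] using H (u₁, u₂) ⟨1, by simpa using hu₁, by simpa using hu₂⟩
  · rintro h u ⟨c, hc₁, hc₂⟩
    rw [hc₁, hc₂, mul_assoc, mul_assoc, h]

theorem stmt5_general (p n : ℕ) (hn : 0 < n)
    (g f : Polynomial (ZMod p))
    (S : Set ((Fin n → ZMod p) × (Fin n → ZMod p)))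
    (hS : S = {ab | ∃ a : Rpn p n,
        toR p n ab.1 = a * mkR p n g ∧ toR p n ab.2 = a * mkR p n f}) :
    ((∀ u ∈ S, ∀ v ∈ S, sympForm p n u v = 0) ↔
      mkR p n g * aeval (xinv p n) f = mkR p n f * aeval (xinv p n) g) ∧
    (∀ ab : (Fin n → ZMod p) × (Fin n → ZMod p),
      (∀ v ∈ S, sympForm p n ab v = 0) ↔
        toR p n ab.1 * aeval (xinv p n) f = toR p n ab.2 * aeval (xinv p n) g) := by
  have : NeZero n := ⟨hn.ne'⟩
  subst hS
  exact ⟨isotropic_negacyclicCode_iff g f, forall_sympForm_negacyclicCode_eq_zero_iff g f⟩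

/-- for `S = {(a·g, a·f) : a ∈ R}` (regarded inside `F_p^n × F_p^n`):
(1) `S` is totally isotropic iff `g(x)f(x⁻¹) = f(x)g(x⁻¹)` in `R`;
(2) `(a,b) ∈ S^⊥` iff `a(x)f(x⁻¹) = b(x)g(x⁻¹)` in `R`. -/
theorem stmt5 (p n : ℕ) [Fact p.Prime] (hp : Odd p) (hn : 0 < n)
    (g f : Polynomial (ZMod p))
    (S : Set ((Fin n → ZMod p) × (Fin n → ZMod p)))
    (hS : S = {ab | ∃ a : Rpn p n,
        toR p n ab.1 = a * mkR p n g ∧ toR p n ab.2 = a * mkR p n f}) :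
    ((∀ u ∈ S, ∀ v ∈ S, sympForm p n u v = 0) ↔
      mkR p n g * aeval (xinv p n) f = mkR p n f * aeval (xinv p n) g) ∧
    (∀ ab : (Fin n → ZMod p) × (Fin n → ZMod p),
      (∀ v ∈ S, sympForm p n ab v = 0) ↔
        toR p n ab.1 * aeval (xinv p n) f = toR p n ab.2 * aeval (xinv p n) g) :=
  stmt5_general p n hn g f S hS
end

section
/- Let p be an odd prime and suppose n divides p^t + 1 for some positive integer t with (p^t+1)/n an odd integer. Let x denote the image of X in R = F_p[X]/(X^n+1). Then x^{p^t+1} = −1 in R, so that x is a unit with x⁻¹ = −x^{p^t}; consequently, for every polynomial f ∈ F_p[X], evaluating at x gives f(x⁻¹) = (f(−x))^{p^t} in R. -/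
open Polynomial

/-!
Since `x^n = -1` and `p^t + 1` is an odd multiple of `n`, `x^{p^t+1} = -1`, which gives the
inverse of `x`. As `p^t` is odd, `-x^{p^t} = (-x)^{p^t}`, and over a finite field with `q`
elements evaluating at `y^{q^t}` commutes with the `q^t`-power map, because `f(X)^q = f(X^q)`.
-/

theorem pow_eq_neg_one_of_dvd_of_odd_div {M : Type*} [Monoid M] [HasDistribNeg M] {a : M}
    {n m : ℕ} (ha : a ^ n = -1) (hdvd : n ∣ m) (hodd : Odd (m / n)) : a ^ m = -1 := by
  rw [← Nat.div_mul_cancel hdvd, pow_mul', ha, hodd.neg_one_pow]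

theorem mul_neg_pow_eq_one_of_pow_succ_eq_neg_one {M : Type*} [Monoid M] [HasDistribNeg M]
    {a : M} {m : ℕ} (ha : a ^ (m + 1) = -1) : a * -a ^ m = 1 := by
  rw [mul_neg, ← pow_succ', ha, neg_neg]

theorem FiniteField.aeval_pow_card_pow {K A : Type*} [Field K] [Fintype K] [CommSemiring A]
    [Algebra K A] (y : A) (f : K[X]) (t : ℕ) :
    aeval (y ^ Fintype.card K ^ t) f = aeval y f ^ Fintype.card K ^ t := by
  induction t with
  | zero => simp
  | succ t ih =>
    rw [pow_succ, pow_mul, pow_mul, ← expand_aeval, FiniteField.expand_card, map_pow, ih]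

theorem ZMod.aeval_pow_prime_pow {p : ℕ} [Fact p.Prime] {A : Type*} [CommSemiring A]
    [Algebra (ZMod p) A] (y : A) (f : (ZMod p)[X]) (t : ℕ) :
    aeval (y ^ p ^ t) f = aeval y f ^ p ^ t := by
  simpa only [ZMod.card] using FiniteField.aeval_pow_card_pow y f t

theorem ZMod.aeval_neg_pow_prime_pow {p : ℕ} [Fact p.Prime] (hp : Odd p) {A : Type*} [CommRing A]
    [Algebra (ZMod p) A] (y : A) (f : (ZMod p)[X]) (t : ℕ) :
    aeval (-y ^ p ^ t) f = aeval (-y) f ^ p ^ t := by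
  rw [← hp.pow.neg_pow, ZMod.aeval_pow_prime_pow]

theorem mkR_X_pow_eq_neg_one (p n : ℕ) : mkR p n X ^ n = -1 := by
  have hzero : mkR p n (X ^ n + 1) = 0 :=
    Ideal.Quotient.eq_zero_iff_mem.mpr (Ideal.subset_span rfl)
  rw [map_add, map_pow, map_one] at hzero
  exact eq_neg_of_add_eq_zero_left hzero

theorem stmt7_general (p n t : ℕ) [Fact p.Prime] (hp : Odd p)
    (hdvd : n ∣ p ^ t + 1) (hq : Odd ((p ^ t + 1) / n)) :
    (mkR p n X) ^ (p ^ t + 1) = -1 ∧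
    mkR p n X * (-(mkR p n X) ^ (p ^ t)) = 1 ∧
    (∀ f : Polynomial (ZMod p),
      aeval (-(mkR p n X) ^ (p ^ t)) f = (aeval (-(mkR p n X)) f) ^ (p ^ t)) := by
  -- The `Neg` of `Rpn p n` in the statement comes from `Submodule.Quotient`, which is only
  -- definitionally (not reducibly) the ring's: hence `(M := Rpn p n)` and no `rw`.
  have hx : mkR p n X ^ (p ^ t + 1) = -1 :=
    pow_eq_neg_one_of_dvd_of_odd_div (M := Rpn p n) (mkR_X_pow_eq_neg_one p n) hdvd hq
  exact ⟨hx, mul_neg_pow_eq_one_of_pow_succ_eq_neg_one (M := Rpn p n) hx,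
    fun f => ZMod.aeval_neg_pow_prime_pow hp _ f t⟩

/-- if `n ∣ p^t + 1` with `(p^t+1)/n` odd, then in `R = F_p[X]/(X^n+1)`
the image `x` of `X` satisfies `x^{p^t+1} = −1`, `x` is a unit with `x⁻¹ = −x^{p^t}`,
and `f(x⁻¹) = (f(−x))^{p^t}` for every polynomial `f ∈ F_p[X]`. -/
theorem stmt7 (p n t : ℕ) [Fact p.Prime] (hp : Odd p) (ht : 0 < t) (hn : 0 < n)
    (hdvd : n ∣ p ^ t + 1) (hq : Odd ((p ^ t + 1) / n)) :
    (mkR p n X) ^ (p ^ t + 1) = -1 ∧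
    mkR p n X * (-(mkR p n X) ^ (p ^ t)) = 1 ∧
    (∀ f : Polynomial (ZMod p),
      aeval (-(mkR p n X) ^ (p ^ t)) f = (aeval (-(mkR p n X)) f) ^ (p ^ t)) :=
  stmt7_general p n t hp hdvd hq
end
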